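/- Let Φ be a completely positive trace-preserving map on the trace class B¹(H) of a complex Hilbert space H, given by Kraus operators (K_j)_{j∈J} with ∑_j K_j*K_j = 1 strongly. Then there exist a Hilbert space K = ℓ²(J) ⊗ ℂ², a unit vector ψ = e_{j₀} ⊗ e₁ ∈ K (for any fixed j₀ ∈ J), and a unitary operator U on H ⊗ K such that Φ(ρ) = tr_K(U (ρ ⊗ |ψ⟩⟨ψ|) U*) for all ρ ∈ B¹(H). -/

import Mathlib

open ContinuousLinearMap

variable {ι : Type*} [DecidableEq ι] {H : Type*} [NormedAddCommGroup H] [InnerProductSpace ℂ H]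

/-- `x ↦ x ⊗ e_i`: the isometric embedding of `H` onto the `i`-th summand of
`H ⊗ ℓ²(ι) ≅ ⊕²_ι H` (modelled as `lp (fun _ : ι => H) 2`), as a continuous linear map. -/
noncomputable def lpSingleL (i : ι) : H →L[ℂ] lp (fun _ : ι => H) 2 :=
  LinearMap.mkContinuous
    { toFun := fun x => lp.single 2 i x
      map_add' := fun x y => by
        apply lp.ext; funext j
        by_cases h : j = i
        · subst h
          simp [lp.single_apply_self, lp.coeFn_add]
        · simp [lp.single_apply_ne _ _ _ h, lp.coeFn_add]
      map_smul' := fun c x => by simp }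
    1 (fun x => by
        simpa using (lp.norm_single (p := 2) (E := fun _ : ι => H) (by norm_num)
          (fun _ => x) i).le)

/-- `(1 ⊗ ⟨e_i|)`: evaluation of the `i`-th component of `H ⊗ ℓ²(ι) ≅ ⊕²_ι H`,
as a continuous linear map. -/
noncomputable def lpProjL (i : ι) : lp (fun _ : ι => H) 2 →L[ℂ] H :=
  LinearMap.mkContinuous
    { toFun := fun f => f i
      map_add' := fun f g => by simp [lp.coeFn_add]
      map_smul' := fun c f => by simp [lp.coeFn_smul] }
    1 (fun f => by rw [one_mul]; exact lp.norm_apply_le_norm (by norm_num) f i)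


/-!
The Kraus operators assemble into the isometry `V x = ∑ⱼ Kⱼ x ⊗ eⱼ ⊗ e₂` (isometric precisely
because `∑ⱼ Kⱼ* Kⱼ = 1`), whose compression satisfies `tr_K (V ρ V*) = ∑ⱼ Kⱼ ρ Kⱼ* = Φ ρ`.
The embedding `S x = x ⊗ ψ` is a second isometry, with range orthogonal to that of `V` because
`ψ` lies off the `e₂` slice. The self-adjoint unitary `U = 1 - SS* - VV* + SV* + VS*` exchanging
the two ranges satisfies `US = V`, hence `U (ρ ⊗ |ψ⟩⟨ψ|) U* = U S ρ S* U* = V ρ V*`.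
-/

open scoped InnerProductSpace

section IsometrySwap

variable {𝕜 E F : Type*} [RCLike 𝕜] [NormedAddCommGroup E] [InnerProductSpace 𝕜 E]
  [CompleteSpace E] [NormedAddCommGroup F] [InnerProductSpace 𝕜 F] [CompleteSpace F]

/-- For isometries `S, V` with orthogonal ranges, the self-adjoint unitary exchanging
`S x` and `V x` and fixing the orthogonal complement of both ranges. -/
noncomputable def isometrySwap (S V : F →L[𝕜] E) : E →L[𝕜] E :=
  1 - S ∘L adjoint S - V ∘L adjoint V + S ∘L adjoint V + V ∘L adjoint S

variable {S V : F →L[𝕜] E}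

theorem adjoint_isometrySwap : adjoint (isometrySwap S V) = isometrySwap S V := by
  simp only [isometrySwap, map_add, map_sub, adjoint_comp, adjoint_adjoint, one_def, adjoint_id]
  abel

theorem isometrySwap_comp_left (hS : adjoint S ∘L S = 1) (hSV : adjoint S ∘L V = 0) :
    isometrySwap S V ∘L S = V := by
  have hVS : adjoint V ∘L S = 0 := by simpa using congrArg adjoint hSV
  simp only [isometrySwap, add_comp, sub_comp, comp_assoc, hS, hVS, one_def, id_comp, comp_id,
    comp_zero]
  abel

theorem isometrySwap_comp_self (hS : adjoint S ∘L S = 1) (hV : adjoint V ∘L V = 1)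
    (hSV : adjoint S ∘L V = 0) : isometrySwap S V ∘L isometrySwap S V = 1 := by
  have hVS : adjoint V ∘L S = 0 := by simpa using congrArg adjoint hSV
  have cancel : ∀ {A B : F →L[𝕜] E} {C : F →L[𝕜] F}, adjoint A ∘L B = C →
      ∀ T : E →L[𝕜] F, adjoint A ∘L (B ∘L T) = C ∘L T := by
    rintro A B C h T; rw [← comp_assoc, h]
  simp only [isometrySwap, add_comp, sub_comp, comp_add, comp_sub, comp_assoc, one_def, id_comp,
    comp_id, cancel hS, cancel hV, cancel hSV, cancel hVS, zero_comp, comp_zero]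
  abel

theorem isometrySwap_mem_unitary (hS : adjoint S ∘L S = 1) (hV : adjoint V ∘L V = 1)
    (hSV : adjoint S ∘L V = 0) : isometrySwap S V ∈ unitary (E →L[𝕜] E) := by
  rw [Unitary.mem_iff, star_eq_adjoint, adjoint_isometrySwap]
  exact ⟨isometrySwap_comp_self hS hV hSV, isometrySwap_comp_self hS hV hSV⟩

theorem isometrySwap_conj (hS : adjoint S ∘L S = 1) (hSV : adjoint S ∘L V = 0) (ρ : F →L[𝕜] F) :
    isometrySwap S V * (S ∘L ρ ∘L adjoint S) * star (isometrySwap S V) = V ∘L ρ ∘L adjoint V := by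
  have hWS := isometrySwap_comp_left hS hSV
  have hW : adjoint (isometrySwap S V) = isometrySwap S V := adjoint_isometrySwap
  rw [star_eq_adjoint]
  generalize isometrySwap S V = W at hWS hW ⊢
  subst hWS
  rw [adjoint_comp, hW]
  rfl

end IsometrySwap

section KrausIsometry

variable {κ : Type*}

theorem lpProjL_comp_lpSingleL_self [DecidableEq κ] (i : κ) :
    lpProjL (H := H) i ∘L lpSingleL i = 1 := by
  ext x
  exact lp.single_apply_self (E := fun _ : κ => H) 2 i x

variable [CompleteSpace H]

theorem adjoint_lpSingleL [DecidableEq κ] (i : κ) :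
    adjoint (lpSingleL (H := H) i) = lpProjL i :=
  ((eq_adjoint_iff _ _).2 fun f x => (lp.inner_single_right i x f).symm).symm

variable {K : κ → H →L[ℂ] H}

theorem hasSum_inner_kraus (hK : ∀ x, HasSum (fun i => adjoint (K i) (K i x)) x) (x y : H) :
    HasSum (fun i => ⟪K i x, K i y⟫_ℂ) ⟪x, y⟫_ℂ := by
  simpa only [innerSL_apply_apply, adjoint_inner_right] using (hK y).mapL (innerSL ℂ x)

theorem memℓp_kraus (hK : ∀ x, HasSum (fun i => adjoint (K i) (K i x)) x) (x : H) :
    Memℓp (fun i => K i x) 2 := by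
  refine memℓp_gen ?_
  have h := ((hasSum_inner_kraus hK x x).mapL RCLike.reCLM).summable
  simp only [RCLike.reCLM_apply, inner_self_eq_norm_sq] at h
  simpa using h

noncomputable def krausIsometry (K : κ → H →L[ℂ] H)
    (hK : ∀ x, HasSum (fun i => adjoint (K i) (K i x)) x) : H →L[ℂ] lp (fun _ : κ => H) 2 :=
  (LinearMap.isometryOfInner
    { toFun := fun x => ⟨fun i => K i x, memℓp_kraus hK x⟩
      map_add' := fun x y => lp.ext <| funext fun i => map_add (K i) x y
      map_smul' := fun c x => lp.ext <| funext fun i => map_smul (K i) c x }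
    fun x y => (lp.hasSum_inner _ _).unique (hasSum_inner_kraus hK x y)).toContinuousLinearMap

variable (hK : ∀ x, HasSum (fun i => adjoint (K i) (K i x)) x)

theorem adjoint_krausIsometry_comp_self : adjoint (krausIsometry K hK) ∘L krausIsometry K hK = 1 :=
  (inner_map_map_iff_adjoint_comp_self _).1 fun x y =>
    (lp.hasSum_inner _ _).unique (hasSum_inner_kraus hK x y)

theorem lpProjL_comp_krausIsometry [DecidableEq κ] (i : κ) :
    lpProjL i ∘L krausIsometry K hK = K i := rfl

theorem lpProjL_conj_krausIsometry_lpSingleL [DecidableEq κ] (ρ : H →L[ℂ] H) (i : κ) (x : H) :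
    lpProjL i ((krausIsometry K hK ∘L ρ ∘L adjoint (krausIsometry K hK)) (lpSingleL i x)) =
      K i (ρ (adjoint (K i) x)) := by
  have h := congrArg adjoint (lpProjL_comp_krausIsometry hK i)
  rw [adjoint_comp, ← adjoint_lpSingleL, adjoint_adjoint] at h
  rw [← h]
  rfl

end KrausIsometry

section KrausPad

variable {J ι' A : Type*} [DecidableEq ι'] [Zero A]

def krausPad (K : J → A) (i : ι') : J × ι' → A :=
  fun m => if m.2 = i then K m.1 else 0

theorem krausPad_of_ne (K : J → A) {i i' : ι'} (h : i' ≠ i) (j : J) :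
    krausPad K i (j, i') = 0 :=
  if_neg h

theorem hasSum_comp_krausPad_iff {M : Type*} [AddCommMonoid M] [TopologicalSpace M]
    (K : J → A) (i : ι') {F : A → M} (hF : F 0 = 0) {a : M} :
    HasSum (fun m => F (krausPad K i m)) a ↔ HasSum (fun j => F (K j)) a := by
  have hinj : Function.Injective fun j : J => (j, i) := fun _ _ h => (Prod.mk.inj h).1
  rw [← hinj.hasSum_iff (f := fun m => F (krausPad K i m)) fun m hm => ?_]
  · simp only [Function.comp_def, krausPad, if_pos]
  · have hmi : m.2 ≠ i := fun h => hm ⟨m.1, by rw [← h]⟩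
    rw [krausPad, if_neg hmi, hF]

end KrausPad

/-- `H ⊗ ℓ²(J) ⊗ ℂ²` is modelled as `lp (fun _ : J × Fin 2 => H) 2`, the index `(j, i)` standing
for `e_j ⊗ e_{i+1}`; so `ψ` is the index `(j₀, 0)`, `ρ ⊗ |ψ⟩⟨ψ|` is
`lpSingleL (j₀, 0) ∘L ρ ∘L lpProjL (j₀, 0)`, and the partial trace is taken strongly, as
`tr_K(A) x = ∑ₘ (1 ⊗ ⟨eₘ|) A (1 ⊗ |eₘ⟩) x`. -/
theorem stinespring_form_of_kraus
    [CompleteSpace H] {J : Type*} [DecidableEq J] (j₀ : J)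
    (K : J → H →L[ℂ] H)
    (hK : ∀ x : H, HasSum (fun j => adjoint (K j) ((K j) x)) x)
    (Φ : (H →L[ℂ] H) →ₗ[ℂ] (H →L[ℂ] H))
    (hΦ : ∀ (ρ : H →L[ℂ] H) (x : H),
      HasSum (fun j => (K j) (ρ ((adjoint (K j)) x))) (Φ ρ x)) :
    ∃ U ∈ unitary (lp (fun _ : J × Fin 2 => H) 2 →L[ℂ] lp (fun _ : J × Fin 2 => H) 2),
      ∀ (ρ : H →L[ℂ] H) (x : H),
        HasSum
          (fun m : J × Fin 2 =>
            lpProjL m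
              ((U * (lpSingleL ((j₀, 0) : J × Fin 2) ∘L ρ ∘L lpProjL ((j₀, 0) : J × Fin 2))
                  * star U) (lpSingleL m x)))
          (Φ ρ x) := by
  set K' := krausPad K (1 : Fin 2)
  have hK' : ∀ x, HasSum (fun m => adjoint (K' m) (K' m x)) x := fun x =>
    (hasSum_comp_krausPad_iff K 1 (F := fun T => adjoint T (T x)) (by simp)).2 (hK x)
  set S := lpSingleL (H := H) ((j₀, 0) : J × Fin 2)
  set V := krausIsometry K' hK'
  have hS : adjoint S ∘L S = 1 := by rw [adjoint_lpSingleL, lpProjL_comp_lpSingleL_self]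
  have hSV : adjoint S ∘L V = 0 := by
    rw [adjoint_lpSingleL, lpProjL_comp_krausIsometry]
    exact krausPad_of_ne K zero_ne_one j₀
  refine ⟨isometrySwap S V, isometrySwap_mem_unitary hS (adjoint_krausIsometry_comp_self hK') hSV,
    fun ρ x => ?_⟩
  rw [← adjoint_lpSingleL, isometrySwap_conj hS hSV]
  simp only [V, lpProjL_conj_krausIsometry_lpSingleL]
  exact (hasSum_comp_krausPad_iff K 1 (F := fun T => T (ρ (adjoint T x))) (by simp)).2 (hΦ ρ x)
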